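/- Let u : ℝ_{≥0} → ℝ_{≥0} be nonincreasing and positive, let x_1,…,x_n span ℂ^N, and let Ĉ = (1/n) Σ_{i=1}^n u(d_i) x_i x_i* where d_i = (1/N) x_i* Ĉ^{-1} x_i, with d_1 ≤ … ≤ d_n. Let Ŝ = (1/n) Σ_i x_i x_i* and φ(s) = s u(s). Then φ(d_n) ≤ (1/N) x_n* Ŝ^{-1} x_n and φ(d_1) ≥ (1/N) x_1* Ŝ^{-1} x_1. Consequently, if φ is nondecreasing, for every i: (1/N) x_1* Ŝ^{-1} x_1 ≤ φ(d_i) ≤ (1/N) x_n* Ŝ^{-1} x_n. -/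

import Mathlib

/-!
Since `u` is nonincreasing and the `dᵢ` are sorted, `u(dₙ) ≤ u(dᵢ) ≤ u(d₁)`, so `Ĉ - u(dₙ) Ŝ` and
`u(d₁) Ŝ - Ĉ` are nonnegative combinations of the rank-one matrices `xᵢ xᵢ*`; that is,
`u(dₙ) Ŝ ⪯ Ĉ ⪯ u(d₁) Ŝ` in the Loewner order. Inversion is operator antitone on positive
definite matrices, so `Ĉ⁻¹ ⪯ u(dₙ)⁻¹ Ŝ⁻¹` and `u(d₁)⁻¹ Ŝ⁻¹ ⪯ Ĉ⁻¹`; evaluating these quadratic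
forms at `xₙ` and `x₁` gives the two bounds on `φ`.
-/

open Matrix
open scoped ComplexOrder MatrixOrder

namespace Matrix

-- the C⋆-algebra structure on `Matrix n n ℂ`, needed for `CStarAlgebra.ringInverse_le_ringInverse`
open scoped Matrix.Norms.L2Operator

variable {n : Type*} [Fintype n]

lemma PosDef.inv_le_inv [DecidableEq n] {A B : Matrix n n ℂ} (hA : A.PosDef) (hAB : A ≤ B) :
    B⁻¹ ≤ A⁻¹ := by
  rw [nonsing_inv_eq_ringInverse, nonsing_inv_eq_ringInverse]
  exact CStarAlgebra.ringInverse_le_ringInverse hAB hA.isStrictlyPositive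

lemma re_dotProduct_mulVec_mono {A B : Matrix n n ℂ} (hAB : A ≤ B) (v : n → ℂ) :
    (star v ⬝ᵥ A *ᵥ v).re ≤ (star v ⬝ᵥ B *ᵥ v).re := by
  have := (le_iff.mp hAB).dotProduct_mulVec_nonneg v
  rw [sub_mulVec, dotProduct_sub] at this
  simpa using (Complex.le_def.mp this).1

lemma smul_sum_smul_vecMulVec_le {ι : Type*} [Fintype ι] {c : ℂ} (hc : 0 ≤ c) {a b : ι → ℝ}
    (hab : ∀ i, a i ≤ b i) (x : ι → n → ℂ) :
    c • ∑ i, (a i : ℂ) • vecMulVec (x i) (star (x i))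
      ≤ c • ∑ i, (b i : ℂ) • vecMulVec (x i) (star (x i)) := by
  rw [le_iff, ← smul_sub, ← Finset.sum_sub_distrib]
  refine PosSemidef.smul (posSemidef_sum _ fun i _ => ?_) hc
  rw [← sub_smul, ← Complex.ofReal_sub]
  exact (posSemidef_vecMulVec_self_star _).smul (by exact_mod_cast sub_nonneg.mpr (hab i))

lemma re_dotProduct_inv_smul_mulVec [DecidableEq n] {S : Matrix n n ℂ} (hS : S.PosDef) {m : ℝ}
    (hm : m ≠ 0) (v : n → ℂ) :
    (star v ⬝ᵥ ((m : ℂ) • S)⁻¹ *ᵥ v).re = m⁻¹ * (star v ⬝ᵥ S⁻¹ *ᵥ v).re := by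
  have hinv : ((m : ℂ) • S)⁻¹ = (m : ℂ)⁻¹ • S⁻¹ := inv_eq_right_inv <| by
    rw [smul_mul_smul_comm, mul_inv_cancel₀ (by exact_mod_cast hm),
      mul_nonsing_inv _ ((isUnit_iff_isUnit_det _).mp hS.isUnit), one_smul]
  rw [hinv, smul_mulVec, dotProduct_smul, smul_eq_mul, ← Complex.ofReal_inv,
    Complex.re_ofReal_mul]

lemma PosDef.le_re_dotProduct_inv_mulVec [DecidableEq n] {S C : Matrix n n ℂ} (hS : S.PosDef)
    {m : ℝ} (hm : 0 < m) (h : (m : ℂ) • S ≤ C) (v : n → ℂ) :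
    m * (star v ⬝ᵥ C⁻¹ *ᵥ v).re ≤ (star v ⬝ᵥ S⁻¹ *ᵥ v).re := by
  have := re_dotProduct_mulVec_mono ((hS.smul (Complex.zero_lt_real.mpr hm)).inv_le_inv h) v
  rwa [re_dotProduct_inv_smul_mulVec hS hm.ne', le_inv_mul_iff₀ hm] at this

lemma PosDef.re_dotProduct_inv_mulVec_le [DecidableEq n] {S C : Matrix n n ℂ} (hC : C.PosDef)
    (hS : S.PosDef) {m : ℝ} (hm : 0 < m) (h : C ≤ (m : ℂ) • S) (v : n → ℂ) :
    (star v ⬝ᵥ S⁻¹ *ᵥ v).re ≤ m * (star v ⬝ᵥ C⁻¹ *ᵥ v).re := by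
  have := re_dotProduct_mulVec_mono (hC.inv_le_inv h) v
  rwa [re_dotProduct_inv_smul_mulVec hS hm.ne', inv_mul_le_iff₀ hm] at this

end Matrix

theorem stmt_12_general {N n : ℕ}
    (u : ℝ → ℝ) (hu_mono : ∀ s t, 0 ≤ s → s ≤ t → u t ≤ u s)
    (hu_pos : ∀ s, 0 ≤ s → 0 < u s)
    (x : Fin (n + 1) → Fin N → ℂ)
    (C S : Matrix (Fin N) (Fin N) ℂ) (hC : C.PosDef) (hS : S.PosDef)
    (d : Fin (n + 1) → ℝ)
    (hd : ∀ i, d i = (1 / (N : ℝ)) * (star (x i) ⬝ᵥ C⁻¹.mulVec (x i)).re)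
    (hd_sorted : Monotone d) (hd_nonneg : ∀ i, 0 ≤ d i)
    (hCdef : C = (1 / ((n : ℂ) + 1)) • ∑ i, (u (d i) : ℂ) • Matrix.vecMulVec (x i) (star (x i)))
    (hSdef : S = (1 / ((n : ℂ) + 1)) • ∑ i, Matrix.vecMulVec (x i) (star (x i))) :
    d (Fin.last n) * u (d (Fin.last n))
        ≤ (1 / (N : ℝ)) * (star (x (Fin.last n)) ⬝ᵥ S⁻¹.mulVec (x (Fin.last n))).re ∧
      (1 / (N : ℝ)) * (star (x 0) ⬝ᵥ S⁻¹.mulVec (x 0)).re ≤ d 0 * u (d 0) ∧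
      ((∀ s t, 0 ≤ s → s ≤ t → s * u s ≤ t * u t) → ∀ i,
        (1 / (N : ℝ)) * (star (x 0) ⬝ᵥ S⁻¹.mulVec (x 0)).re ≤ d i * u (d i) ∧
          d i * u (d i)
            ≤ (1 / (N : ℝ)) * (star (x (Fin.last n)) ⬝ᵥ S⁻¹.mulVec (x (Fin.last n))).re) := by
  have hu_d : ∀ i j, i ≤ j → u (d j) ≤ u (d i) :=
    fun i j hij => hu_mono _ _ (hd_nonneg i) (hd_sorted hij)
  have hc : (0 : ℂ) ≤ 1 / ((n : ℂ) + 1) := by positivity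
  have hSC : (u (d (Fin.last n)) : ℂ) • S ≤ C := by
    rw [hSdef, smul_comm, Finset.smul_sum, hCdef]
    exact smul_sum_smul_vecMulVec_le hc (fun i => hu_d i _ (Fin.le_last i)) x
  have hCS : C ≤ (u (d 0) : ℂ) • S := by
    rw [hSdef, smul_comm, Finset.smul_sum, hCdef]
    exact smul_sum_smul_vecMulVec_le hc (fun i => hu_d 0 i (Fin.zero_le i)) x
  have upper :=
    calc d (Fin.last n) * u (d (Fin.last n))
        = 1 / N * (u (d (Fin.last n)) * (star (x (Fin.last n)) ⬝ᵥ C⁻¹ *ᵥ x (Fin.last n)).re) := by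
          rw [hd (Fin.last n)]; ring
      _ ≤ 1 / N * (star (x (Fin.last n)) ⬝ᵥ S⁻¹ *ᵥ x (Fin.last n)).re := by
          gcongr
          exact hS.le_re_dotProduct_inv_mulVec (hu_pos _ (hd_nonneg _)) hSC _
  have lower :=
    calc 1 / N * (star (x 0) ⬝ᵥ S⁻¹ *ᵥ x 0).re
        ≤ 1 / N * (u (d 0) * (star (x 0) ⬝ᵥ C⁻¹ *ᵥ x 0).re) := by
          gcongr
          exact hC.re_dotProduct_inv_mulVec_le hS (hu_pos _ (hd_nonneg _)) hCS _
      _ = d 0 * u (d 0) := by rw [hd 0]; ring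
  refine ⟨upper, lower, fun hφ i => ⟨?_, ?_⟩⟩
  · exact lower.trans (hφ _ _ (hd_nonneg 0) (hd_sorted (Fin.zero_le i)))
  · exact (hφ _ _ (hd_nonneg i) (hd_sorted (Fin.le_last i))).trans upper

theorem stmt_12 {N n : ℕ} (hN : 0 < N)
    (u : ℝ → ℝ) (hu_mono : ∀ s t, 0 ≤ s → s ≤ t → u t ≤ u s)
    (hu_pos : ∀ s, 0 ≤ s → 0 < u s)
    (x : Fin (n + 1) → Fin N → ℂ)
    (C S : Matrix (Fin N) (Fin N) ℂ) (hC : C.PosDef) (hS : S.PosDef)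
    (d : Fin (n + 1) → ℝ)
    (hd : ∀ i, d i = (1 / (N : ℝ)) * (star (x i) ⬝ᵥ C⁻¹.mulVec (x i)).re)
    (hd_sorted : Monotone d) (hd_nonneg : ∀ i, 0 ≤ d i)
    (hCdef : C = (1 / ((n : ℂ) + 1)) • ∑ i, (u (d i) : ℂ) • Matrix.vecMulVec (x i) (star (x i)))
    (hSdef : S = (1 / ((n : ℂ) + 1)) • ∑ i, Matrix.vecMulVec (x i) (star (x i))) :
    d (Fin.last n) * u (d (Fin.last n))
        ≤ (1 / (N : ℝ)) * (star (x (Fin.last n)) ⬝ᵥ S⁻¹.mulVec (x (Fin.last n))).re ∧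
      (1 / (N : ℝ)) * (star (x 0) ⬝ᵥ S⁻¹.mulVec (x 0)).re ≤ d 0 * u (d 0) ∧
      ((∀ s t, 0 ≤ s → s ≤ t → s * u s ≤ t * u t) → ∀ i,
        (1 / (N : ℝ)) * (star (x 0) ⬝ᵥ S⁻¹.mulVec (x 0)).re ≤ d i * u (d i) ∧
          d i * u (d i)
            ≤ (1 / (N : ℝ)) * (star (x (Fin.last n)) ⬝ᵥ S⁻¹.mulVec (x (Fin.last n))).re) :=
  stmt_12_general u hu_mono hu_pos x C S hC hS d hd hd_sorted hd_nonneg hCdef hSdef
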